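/- arXiv:1711.06378 — 2 statements merged into one kernel-verified Lean document; each statement's English description precedes it below -/
import Mathlib

section
/- Let λ₁ ≥ 0, σ₁ > 0, 0 ≤ τ_R ≤ τ_D, x₀ = (λ₁/σ₁)·[1 − e^{−(τ_D−τ_R)σ₁}/(2 − e^{−τ_D σ₁})], and let s ∈ [0, τ_D). Let M₀ ~ Poisson(x₀), let A be an e^{−σ₁ s}-thinning of M₀, let B ~ Poisson((λ₁/σ₁)(1 − e^{−s σ₁})), and, if s ≥ τ_R, let C ~ Poisson((λ₁/σ₁)(1 − e^{−(s−τ_R)σ₁})) (and C = 0 if s < τ_R), with A, B, C independent. Then A + B + C is Poisson(x_s) distributed, where x_s = (λ₁/σ₁)·[1 − e^{−(s+τ_D−τ_R)σ₁}/(2 − e^{−τ_D σ₁}) + 1_{s ≥ τ_R}·(1 − e^{−(s−τ_R)σ₁})]. -/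
/-!
A Poisson(`x`) count thinned with probability `r` is Poisson(`r x`): given the initial count `m`
the survivors are binomial `(m, r)`, and averaging the binomial probabilities against the Poisson
weights leaves an exponential series. Hence `A` is Poisson(`e^{-σ₁ s} x₀`), and since independent
Poisson variables add, `A + B + C` is Poisson with the sum of the three rates, which is `x_s`.
-/

open MeasureTheory ProbabilityTheory

/-- `X` has the Poisson distribution with (real, nonnegative) parameter `r`:
`ℙ[X = n] = e^{-r} r^n / n!` for all `n : ℕ`. -/
def HasPoissonLaw {Ω : Type*} [MeasurableSpace Ω] (μ : Measure Ω) (r : ℝ)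
    (X : Ω → ℕ) : Prop :=
  ∀ n : ℕ, μ {ω | X ω = n} = ENNReal.ofReal (Real.exp (-r) * r ^ n / n.factorial)

/-- `Y` is an `r`-thinning of `X`: `Y = ∑_{i < X} B i` for some family `(B i)` of
i.i.d. Bernoulli(`r`) random variables independent of `X`. -/
def IsThinning {Ω : Type*} [MeasurableSpace Ω] (μ : Measure Ω) (r : ℝ)
    (X Y : Ω → ℕ) : Prop :=
  ∃ B : ℕ → Ω → ℕ, (∀ i, Measurable (B i)) ∧
    (∀ i, μ {ω | B i ω = 1} = ENNReal.ofReal r) ∧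
    (∀ i, μ {ω | B i ω = 0} = ENNReal.ofReal (1 - r)) ∧
    iIndepFun (fun i : ℕ => if i = 0 then X else B (i - 1)) μ ∧
    ∀ ω, Y ω = ∑ i ∈ Finset.range (X ω), B i ω

open Finset Nat Real

theorem choose_succ_mul_pow_mul_one_sub_pow (r : ℝ) (m k : ℕ) :
    ((m + 1).choose (k + 1) : ℝ) * r ^ (k + 1) * (1 - r) ^ (m - k)
      = (m.choose (k + 1) : ℝ) * r ^ (k + 1) * (1 - r) ^ (m - (k + 1)) * (1 - r)
        + (m.choose k : ℝ) * r ^ k * (1 - r) ^ (m - k) * r := by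
  rw [Nat.choose_succ_succ']
  rcases lt_or_ge k m with hkm | hmk
  · obtain ⟨j, rfl⟩ := Nat.exists_eq_add_of_lt hkm
    rw [show k + j + 1 - k = j + 1 by omega, show k + j + 1 - (k + 1) = j by omega]
    push_cast
    ring
  · rw [Nat.choose_eq_zero_of_lt (by omega : m < k + 1), Nat.sub_eq_zero_of_le hmk]
    push_cast
    ring

theorem choose_mul_pow_mul_one_sub_pow_nonneg {r : ℝ} (hr0 : 0 ≤ r) (hr1 : r ≤ 1) (m n : ℕ) :
    0 ≤ (m.choose n : ℝ) * r ^ n * (1 - r) ^ (m - n) := by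
  have : 0 ≤ 1 - r := by linarith
  positivity

theorem hasSum_poisson_mul_binomial (x r : ℝ) (n : ℕ) :
    HasSum (fun m : ℕ => exp (-x) * x ^ m / m ! * (m.choose n * r ^ n * (1 - r) ^ (m - n)))
      (exp (-(r * x)) * (r * x) ^ n / n !) := by
  have hshift : ∀ j : ℕ,
      exp (-x) * x ^ (j + n) / (j + n)! * ((j + n).choose n * r ^ n * (1 - r) ^ (j + n - n))
        = exp (-x) * (r * x) ^ n / n ! * ((x * (1 - r)) ^ j / j !) := by
    intro j
    rw [← Nat.add_choose_mul_factorial_mul_factorial j n, Nat.add_sub_cancel]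
    have hchoose : ((j + n).choose n : ℝ) ≠ 0 := by
      exact_mod_cast (Nat.choose_pos (by omega)).ne'
    rw [mul_pow, pow_add, mul_pow]
    push_cast
    field_simp [hchoose]
  have hlow : ∑ i ∈ range n, exp (-x) * x ^ i / i ! * (i.choose n * r ^ n * (1 - r) ^ (i - n))
      = 0 := Finset.sum_eq_zero fun i hi => by
    simp [Nat.choose_eq_zero_of_lt (Finset.mem_range.1 hi)]
  -- Only `m ≥ n` contributes; with `m = j + n` the series is a multiple of that of
  -- `exp (x * (1 - r))`.
  rw [← hasSum_nat_add_iff' n, hlow, sub_zero]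
  simp only [hshift]
  have hexp := NormedSpace.expSeries_div_hasSum_exp (x * (1 - r))
  rw [← Real.exp_eq_exp_ℝ] at hexp
  have hsum : exp (-(r * x)) * (r * x) ^ n / n !
      = exp (-x) * (r * x) ^ n / n ! * exp (x * (1 - r)) := by
    rw [show -(r * x) = -x + x * (1 - r) by ring, Real.exp_add]
    ring
  rw [hsum]
  exact hexp.mul_left _

section

variable {Ω : Type*} [MeasurableSpace Ω] {μ : Measure Ω}

theorem measure_add_eq_of_indepFun_bernoulli [IsProbabilityMeasure μ] {S X : Ω → ℕ} {r : ℝ}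
    (hr0 : 0 ≤ r) (hr1 : r ≤ 1) (hS : Measurable S) (hX : Measurable X)
    (hX0 : μ {ω | X ω = 0} = ENNReal.ofReal (1 - r)) (hX1 : μ {ω | X ω = 1} = ENNReal.ofReal r)
    (hSX : IndepFun S X μ) (n : ℕ) :
    μ {ω | S ω + X ω = n}
      = μ {ω | S ω = n} * ENNReal.ofReal (1 - r) + μ {ω | S ω + 1 = n} * ENNReal.ofReal r := by
  have hX01 : ∀ᵐ ω ∂μ, X ω = 0 ∨ X ω = 1 := by
    have hmeas : MeasurableSet {ω | X ω = 0 ∨ X ω = 1} := by measurability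
    refine ae_iff.2 ((prob_compl_eq_zero_iff (μ := μ) hmeas).2 ?_)
    have hdisj : Disjoint {ω | X ω = 0} {ω | X ω = 1} :=
      Set.disjoint_left.2 fun ω (h0 : X ω = 0) (h1 : X ω = 1) => by omega
    rw [Set.ofPred_or, measure_union hdisj (hX (measurableSet_singleton 1)), hX0, hX1,
      ← ENNReal.ofReal_add (by linarith) hr0, sub_add_cancel, ENNReal.ofReal_one]
  have hsplit : {ω | S ω + X ω = n} =ᵐ[μ]
      (S ⁻¹' {n} ∩ X ⁻¹' {0} ∪ S ⁻¹' {k | k + 1 = n} ∩ X ⁻¹' {1} : Set Ω) := by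
    refine Filter.eventuallyEq_set.2 ?_
    filter_upwards [hX01] with ω hω
    rcases hω with h | h <;> simp [h]
  have hdisj : Disjoint (S ⁻¹' {n} ∩ X ⁻¹' {0}) (S ⁻¹' {k | k + 1 = n} ∩ X ⁻¹' {1}) :=
    Set.disjoint_left.2 fun ω h0 h1 => by simp_all
  rw [measure_congr hsplit, measure_union hdisj
      ((hS .of_discrete).inter (hX (measurableSet_singleton _))),
    hSX.measure_inter_preimage_eq_mul _ _ .of_discrete (measurableSet_singleton _),
    hSX.measure_inter_preimage_eq_mul _ _ .of_discrete (measurableSet_singleton _), ← hX0, ← hX1]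
  rfl

theorem measure_sum_range_eq_binomial [IsProbabilityMeasure μ] {B : ℕ → Ω → ℕ} {r : ℝ}
    (hr0 : 0 ≤ r) (hr1 : r ≤ 1) (hB : ∀ i, Measurable (B i))
    (hB0 : ∀ i, μ {ω | B i ω = 0} = ENNReal.ofReal (1 - r))
    (hB1 : ∀ i, μ {ω | B i ω = 1} = ENNReal.ofReal r) (hind : iIndepFun B μ) (m n : ℕ) :
    μ {ω | ∑ i ∈ range m, B i ω = n}
      = ENNReal.ofReal (m.choose n * r ^ n * (1 - r) ^ (m - n)) := by
  induction m generalizing n with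
  | zero => cases n <;> simp
  | succ m ih =>
    have hS : Measurable fun ω => ∑ i ∈ range m, B i ω := by fun_prop
    have hSB : IndepFun (fun ω => ∑ i ∈ range m, B i ω) (B m) μ := by
      simpa only [← Finset.sum_apply] using
        hind.indepFun_finsetSum_of_notMem hB (Finset.notMem_range_self (n := m))
    have hbin_nonneg := choose_mul_pow_mul_one_sub_pow_nonneg hr0 hr1 m
    simp only [Finset.sum_range_succ]
    rw [measure_add_eq_of_indepFun_bernoulli hr0 hr1 hS (hB m) (hB0 m) (hB1 m) hSB]
    cases n with
    | zero =>
      simp only [Nat.add_one_ne_zero, Set.ofPred_false, measure_empty, zero_mul, add_zero, ih,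
        ← ENNReal.ofReal_mul (hbin_nonneg 0)]
      simp [pow_succ]
    | succ k =>
      simp only [Nat.add_right_cancel_iff, ih, ← ENNReal.ofReal_mul (hbin_nonneg _)]
      rw [← ENNReal.ofReal_add (mul_nonneg (hbin_nonneg _) (by linarith))
          (mul_nonneg (hbin_nonneg _) hr0), Nat.add_sub_add_right,
        choose_succ_mul_pow_mul_one_sub_pow]

theorem measure_eq_tsum_of_indepFun_index {M : Ω → ℕ} {S : ℕ → Ω → ℕ} (hM : Measurable M)
    (hS : ∀ m, Measurable (S m)) (hind : ∀ m, IndepFun M (S m) μ) (n : ℕ) :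
    μ {ω | S (M ω) ω = n} = ∑' m, μ {ω | M ω = m} * μ {ω | S m ω = n} := by
  have hunion : {ω | S (M ω) ω = n} = ⋃ m, M ⁻¹' {m} ∩ S m ⁻¹' {n} := by
    ext ω
    simp
  rw [hunion, measure_iUnion]
  · exact tsum_congr fun m => (hind m).measure_inter_preimage_eq_mul _ _
      (measurableSet_singleton _) (measurableSet_singleton _)
  · exact fun i j hij => Set.disjoint_left.2 fun ω hi hj => hij (hi.1.symm.trans hj.1)
  · exact fun m => (hM (measurableSet_singleton _)).inter (hS m (measurableSet_singleton _))

theorem IsThinning.hasPoissonLaw [IsProbabilityMeasure μ] {r x : ℝ} {X Y : Ω → ℕ}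
    (hr0 : 0 ≤ r) (hr1 : r ≤ 1) (hx : 0 ≤ x) (hX : Measurable X) (hXlaw : HasPoissonLaw μ x X)
    (hthin : IsThinning μ r X Y) : HasPoissonLaw μ (r * x) Y := by
  obtain ⟨B, hB, hB1, hB0, hind, hY⟩ := hthin
  set g : ℕ → Ω → ℕ := fun i => if i = 0 then X else B (i - 1)
  have hg : ∀ i, Measurable (g i) := fun i => by
    rcases i with _ | i
    exacts [hX, hB i]
  have hBind : iIndepFun B μ := by
    simpa [g, Function.comp_def] using hind.precomp Nat.succ_injective
  have hXS : ∀ m, IndepFun X (fun ω => ∑ i ∈ range m, B i ω) μ := fun m => by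
    have h0 : 0 ∉ (range m).map ⟨Nat.succ, Nat.succ_injective⟩ := by simp
    simpa [g, ← Finset.sum_apply] using (hind.indepFun_finsetSum_of_notMem hg h0).symm
  intro n
  have hYn : {ω | Y ω = n} = {ω | ∑ i ∈ range (X ω), B i ω = n} := by simp only [hY]
  have hpoisson_nonneg : ∀ m : ℕ, 0 ≤ exp (-x) * x ^ m / m ! := fun m => by positivity
  have hbin_nonneg := choose_mul_pow_mul_one_sub_pow_nonneg hr0 hr1
  have hsum := hasSum_poisson_mul_binomial x r n
  rw [hYn, measure_eq_tsum_of_indepFun_index (S := fun m ω => ∑ i ∈ range m, B i ω) hX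
      (fun m => by fun_prop) hXS,
    tsum_congr fun m => by
      rw [hXlaw m, measure_sum_range_eq_binomial hr0 hr1 hB hB0 hB1 hBind,
        ← ENNReal.ofReal_mul (hpoisson_nonneg m)],
    ← ENNReal.ofReal_tsum_of_nonneg (fun m => mul_nonneg (hpoisson_nonneg m) (hbin_nonneg m n))
      hsum.summable, hsum.tsum_eq]

theorem hasPoissonLaw_iff_hasLaw {r : ℝ} (hr : 0 ≤ r) {X : Ω → ℕ} (hX : Measurable X) :
    HasPoissonLaw μ r X ↔ HasLaw X (poissonMeasure r.toNNReal) μ := by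
  have hmap : ∀ n, μ.map X {n} = μ {ω | X ω = n} :=
    fun n => Measure.map_apply hX (measurableSet_singleton n)
  refine ⟨fun h => ⟨hX.aemeasurable, Measure.ext_of_singleton fun n => ?_⟩, fun h n => ?_⟩
  · rw [hmap, poissonMeasure_singleton, Real.coe_toNNReal r hr, h n]
  · rw [← hmap, h.map_eq, poissonMeasure_singleton, Real.coe_toNNReal r hr]

theorem HasPoissonLaw.add {a b : ℝ} {X Y : Ω → ℕ} (ha : 0 ≤ a) (hb : 0 ≤ b)
    (hX : Measurable X) (hY : Measurable Y) (hXlaw : HasPoissonLaw μ a X)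
    (hYlaw : HasPoissonLaw μ b Y) (hXY : IndepFun X Y μ) :
    HasPoissonLaw μ (a + b) (X + Y) := by
  rw [hasPoissonLaw_iff_hasLaw (add_nonneg ha hb) (hX.add hY), Real.toNNReal_add ha hb]
  exact hXY.hasLaw_add_poissonMeasure ((hasPoissonLaw_iff_hasLaw ha hX).1 hXlaw)
    ((hasPoissonLaw_iff_hasLaw hb hY).1 hYlaw)

theorem hasPoissonLaw_zero [IsProbabilityMeasure μ] {X : Ω → ℕ} (hX : ∀ ω, X ω = 0) :
    HasPoissonLaw μ 0 X := by
  intro n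
  rcases n with _ | n <;> simp [hX]

end

theorem mRNA_number_poisson_during_cycle_general
    {Ω : Type*} [MeasurableSpace Ω] (μ : Measure Ω) [IsProbabilityMeasure μ]
    (lam1 sig1 tauR tauD s : ℝ)
    (hlam1 : 0 ≤ lam1) (hsig1 : 0 < sig1) (htauR : 0 ≤ tauR) (htauRD : tauR ≤ tauD)
    (hs0 : 0 ≤ s)
    (x0 : ℝ)
    (hx0 : x0 = lam1 / sig1
      * (1 - Real.exp (-(tauD - tauR) * sig1) / (2 - Real.exp (-tauD * sig1))))
    (M0 A B C : Ω → ℕ)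
    (hM0 : Measurable M0) (hA : Measurable A) (hB : Measurable B) (hC : Measurable C)
    (hM0law : HasPoissonLaw μ x0 M0)
    (hAthin : IsThinning μ (Real.exp (-sig1 * s)) M0 A)
    (hBlaw : HasPoissonLaw μ (lam1 / sig1 * (1 - Real.exp (-s * sig1))) B)
    (hClaw : if tauR ≤ s then
        HasPoissonLaw μ (lam1 / sig1 * (1 - Real.exp (-(s - tauR) * sig1))) C
      else ∀ ω, C ω = 0)
    (hIndep : iIndepFun ![A, B, C] μ) :
    HasPoissonLaw μ
      (lam1 / sig1 * (1 - Real.exp (-(s + tauD - tauR) * sig1) / (2 - Real.exp (-tauD * sig1))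
        + (if tauR ≤ s then 1 else 0) * (1 - Real.exp (-(s - tauR) * sig1))))
      (fun ω => A ω + B ω + C ω) := by
  have hrate : ∀ t, 0 ≤ t → 0 ≤ lam1 / sig1 * (1 - exp (-t * sig1)) := fun t ht =>
    mul_nonneg (div_nonneg hlam1 hsig1.le) (sub_nonneg.2 (exp_le_one_iff.2 (by nlinarith)))
  have hx0_nonneg : 0 ≤ x0 := by
    have hnum : exp (-(tauD - tauR) * sig1) ≤ 1 := exp_le_one_iff.2 (by nlinarith)
    have hden : exp (-tauD * sig1) ≤ 1 := exp_le_one_iff.2 (by nlinarith)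
    rw [hx0]
    exact mul_nonneg (div_nonneg hlam1 hsig1.le)
      (sub_nonneg.2 ((div_le_one (by linarith)).2 (by linarith)))
  have hAlaw : HasPoissonLaw μ (exp (-sig1 * s) * x0) A :=
    hAthin.hasPoissonLaw (exp_pos _).le (exp_le_one_iff.2 (by nlinarith)) hx0_nonneg hM0 hM0law
  have hc_nonneg : 0 ≤ if tauR ≤ s then lam1 / sig1 * (1 - exp (-(s - tauR) * sig1)) else 0 := by
    split_ifs with h
    exacts [hrate _ (sub_nonneg.2 h), le_rfl]
  have hClaw' : HasPoissonLaw μ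
      (if tauR ≤ s then lam1 / sig1 * (1 - exp (-(s - tauR) * sig1)) else 0) C := by
    split_ifs at hClaw ⊢
    exacts [hClaw, hasPoissonLaw_zero hClaw]
  have hAB : IndepFun A B μ := by simpa using hIndep.indepFun (i := 0) (j := 1) (by decide)
  have hABC : IndepFun (A + B) C μ := by
    have hmeas : ∀ i, Measurable (![A, B, C] i) := fun i => by fin_cases i <;> assumption
    simpa using hIndep.indepFun_add_left hmeas 0 1 2 (by decide) (by decide)
  have ha_nonneg := mul_nonneg (exp_pos (-sig1 * s)).le hx0_nonneg
  have hABlaw := hAlaw.add ha_nonneg (hrate s hs0) hA hB hBlaw hAB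
  convert hABlaw.add (add_nonneg ha_nonneg (hrate s hs0)) hc_nonneg (hA.add hB) hC hClaw' hABC
    using 1
  · rw [hx0, show -(s + tauD - tauR) * sig1 = -sig1 * s + -(tauD - tauR) * sig1 by ring, exp_add,
      show -s * sig1 = -sig1 * s by ring]
    split_ifs <;> ring
  · rfl

/-- At equilibrium, at time `s ∈ [0, τ_D)` of the cell cycle, the mRNA
number is Poisson distributed with parameter
`x_s = (λ₁/σ₁)(1 − e^{−(s+τ_D−τ_R)σ₁}/(2 − e^{−τ_D σ₁}) + 1_{s ≥ τ_R}(1 − e^{−(s−τ_R)σ₁}))`: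
if `M₀ ~ Poisson(x₀)`, `A` is an `e^{−σ₁ s}`-thinning of `M₀`,
`B ~ Poisson((λ₁/σ₁)(1 − e^{−s σ₁}))`, `C ~ Poisson((λ₁/σ₁)(1 − e^{−(s−τ_R)σ₁}))` when
`s ≥ τ_R` and `C = 0` otherwise, and `A, B, C` are independent, then `A + B + C` is
Poisson(x_s) distributed. -/
theorem mRNA_number_poisson_during_cycle
    {Ω : Type*} [MeasurableSpace Ω] (μ : Measure Ω) [IsProbabilityMeasure μ]
    (lam1 sig1 tauR tauD s : ℝ)
    (hlam1 : 0 ≤ lam1) (hsig1 : 0 < sig1) (htauR : 0 ≤ tauR) (htauRD : tauR ≤ tauD)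
    (hs0 : 0 ≤ s) (hsD : s < tauD)
    (x0 : ℝ)
    (hx0 : x0 = lam1 / sig1
      * (1 - Real.exp (-(tauD - tauR) * sig1) / (2 - Real.exp (-tauD * sig1))))
    (M0 A B C : Ω → ℕ)
    (hM0 : Measurable M0) (hA : Measurable A) (hB : Measurable B) (hC : Measurable C)
    (hM0law : HasPoissonLaw μ x0 M0)
    (hAthin : IsThinning μ (Real.exp (-sig1 * s)) M0 A)
    (hBlaw : HasPoissonLaw μ (lam1 / sig1 * (1 - Real.exp (-s * sig1))) B)
    (hClaw : if tauR ≤ s then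
        HasPoissonLaw μ (lam1 / sig1 * (1 - Real.exp (-(s - tauR) * sig1))) C
      else ∀ ω, C ω = 0)
    (hIndep : iIndepFun ![A, B, C] μ) :
    HasPoissonLaw μ
      (lam1 / sig1 * (1 - Real.exp (-(s + tauD - tauR) * sig1) / (2 - Real.exp (-tauD * sig1))
        + (if tauR ≤ s then 1 else 0) * (1 - Real.exp (-(s - tauR) * sig1))))
      (fun ω => A ω + B ω + C ω) :=
  mRNA_number_poisson_during_cycle_general μ lam1 sig1 tauR tauD s hlam1 hsig1 htauR htauRD hs0 x0
    hx0 M0 A B C hM0 hA hB hC hM0law hAthin hBlaw hClaw hIndep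
end

section
/- Let σ₁ > 0, λ₁, λ₂ ≥ 0, t ≥ 0 and M_τ, P_τ ∈ ℝ with M_τ ≥ 0. For ζ in a neighborhood of 0 (with ζ < σ₁ and (σ₁ − ζ e^{−(σ₁−ζ)t})/(σ₁ − ζ) > 0) define h₂(ζ) = exp( M_τ·log((σ₁ − ζ·e^{−(σ₁−ζ)t})/(σ₁ − ζ)) + 2λ₁·(ζ/(σ₁−ζ))·(t − (1 − e^{−(σ₁−ζ)t})/(σ₁−ζ)) ), and for ξ in a neighborhood of 0 define F₂(ξ) = e^{ξ P_τ}·h₂(λ₂(e^{ξ} − 1)). Then F₂ is twice differentiable at 0 with F₂′(0) = P_τ + λ₂·(2(λ₁/σ₁)t + (M_τ − 2λ₁/σ₁)·(1 − e^{−σ₁ t})/σ₁) and F₂″(0) = (F₂′(0))² + M_τ·(λ₂/σ₁)·(1 − e^{−σ₁ t} + (λ₂/σ₁)[1 − e^{−σ₁ t}(e^{−σ₁ t} + 2 t σ₁)]) + 2(λ₁λ₂/σ₁²)·[t σ₁ − 1 + e^{−σ₁ t} + 2(λ₂/σ₁)(σ₁ t (1 + e^{−σ₁ t}) − 2(1 −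 e^{−σ₁ t}))]. -/
open Real Filter Topology

/-!
Near `0`, `F₂ = exp ∘ g` with `g ξ = ξ P_τ + K (λ₂ (e^ξ - 1))` and `K = M_τ L + 2 λ₁ R`, where
`L ζ = log ((σ₁ - ζ e^{-(σ₁-ζ)t}) / (σ₁ - ζ))` is the cumulant generating function of `min (T, t)`
for an `Exp(σ₁)`-distributed lifetime `T` (one mRNA present at replication) and `R` accounts for
the mRNAs transcribed afterwards. Since `g 0 = 0`, the chain rule to second order gives
`F₂'(0) = g'(0) = P_τ + λ₂ K'(0)` and `F₂''(0) = g'(0)² + g''(0)` with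
`g''(0) = λ₂ K'(0) + λ₂² K''(0)`; `K'(0)` and `K''(0)` come from explicit formulas for `L'`, `R'`.
-/

def HasSecondDerivAt (f f' : ℝ → ℝ) (f'' x : ℝ) : Prop :=
  (∀ᶠ y in 𝓝 x, HasDerivAt f (f' y) y) ∧ HasDerivAt f' f'' x

namespace HasSecondDerivAt

variable {f f' g g' : ℝ → ℝ} {f'' g'' x y : ℝ}

theorem hasDerivAt (h : HasSecondDerivAt f f' f'' x) : HasDerivAt f (f' x) x :=
  h.1.self_of_nhds

theorem hasDerivAt_deriv (h : HasSecondDerivAt f f' f'' x) : HasDerivAt (deriv f) f'' x :=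
  h.2.congr_of_eventuallyEq (h.1.mono fun _ hy => hy.deriv)

theorem congr_of_eventuallyEq (h : HasSecondDerivAt f f' f'' x) (hg : g =ᶠ[𝓝 x] f) :
    HasSecondDerivAt g f' f'' x :=
  ⟨(h.1.and hg.eventuallyEq_nhds).mono fun _ hy => hy.1.congr_of_eventuallyEq hy.2, h.2⟩

theorem add (hf : HasSecondDerivAt f f' f'' x) (hg : HasSecondDerivAt g g' g'' x) :
    HasSecondDerivAt (fun y => f y + g y) (fun y => f' y + g' y) (f'' + g'') x :=
  ⟨(hf.1.and hg.1).mono fun _ hy => hy.1.add hy.2, hf.2.add hg.2⟩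

theorem const_mul (c : ℝ) (hf : HasSecondDerivAt f f' f'' x) :
    HasSecondDerivAt (fun y => c * f y) (fun y => c * f' y) (c * f'') x :=
  ⟨hf.1.mono fun _ hy => hy.const_mul c, hf.2.const_mul c⟩

theorem comp (hf : HasSecondDerivAt f f' f'' y) (hg : HasSecondDerivAt g g' g'' x)
    (hy : g x = y) :
    HasSecondDerivAt (f ∘ g) (fun z => f' (g z) * g' z) (f'' * g' x ^ 2 + f' y * g'') x := by
  subst hy
  have hfg : ∀ᶠ z in 𝓝 x, HasDerivAt f (f' (g z)) (g z) :=
    hg.hasDerivAt.continuousAt.tendsto.eventually hf.1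
  refine ⟨(hfg.and hg.1).mono fun z hz => hz.1.comp z hz.2, ?_⟩
  refine ((hf.2.comp x hg.hasDerivAt).mul hg.2).congr_deriv ?_
  simp only [Function.comp_apply]
  ring

end HasSecondDerivAt

theorem hasSecondDerivAt_exp (x : ℝ) : HasSecondDerivAt exp exp (exp x) x :=
  ⟨.of_forall hasDerivAt_exp, hasDerivAt_exp x⟩

theorem hasSecondDerivAt_mul_const (c x : ℝ) :
    HasSecondDerivAt (fun y => y * c) (fun _ => c) 0 x :=
  ⟨.of_forall fun y => by simpa using (hasDerivAt_id' y).mul_const c, hasDerivAt_const x c⟩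

theorem hasSecondDerivAt_const_mul_exp_sub_one (a x : ℝ) :
    HasSecondDerivAt (fun y => a * (exp y - 1)) (fun y => a * exp y) (a * exp x) x :=
  ⟨.of_forall fun y => ((hasDerivAt_exp y).sub_const 1).const_mul a,
    (hasDerivAt_exp x).const_mul a⟩

section MRNA
variable (σ t : ℝ)

noncomputable def cgfInitialMRNA (ζ : ℝ) : ℝ :=
  log ((σ - ζ * exp (-(σ - ζ) * t)) / (σ - ζ))

noncomputable def cgfInitialMRNADeriv (ζ : ℝ) : ℝ :=
  1 / (σ - ζ) - exp (-(σ - ζ) * t) * (1 + ζ * t) / (σ - ζ * exp (-(σ - ζ) * t))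

noncomputable def cgfNewMRNA (ζ : ℝ) : ℝ :=
  ζ / (σ - ζ) * (t - (1 - exp (-(σ - ζ) * t)) / (σ - ζ))

noncomputable def cgfNewMRNADeriv (ζ : ℝ) : ℝ :=
  σ / (σ - ζ) ^ 2 * (t - (1 - exp (-(σ - ζ) * t)) / (σ - ζ))
    + ζ / (σ - ζ) * ((t * exp (-(σ - ζ) * t) * (σ - ζ) - (1 - exp (-(σ - ζ) * t))) / (σ - ζ) ^ 2)

@[simp]
theorem cgfInitialMRNA_zero : cgfInitialMRNA σ t 0 = 0 := by
  rcases eq_or_ne σ 0 with hσ | hσ <;> simp [cgfInitialMRNA, hσ]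

@[simp]
theorem cgfNewMRNA_zero : cgfNewMRNA σ t 0 = 0 := by
  simp [cgfNewMRNA]

theorem cgfInitialMRNADeriv_zero : cgfInitialMRNADeriv σ t 0 = (1 - exp (-σ * t)) / σ := by
  simp [cgfInitialMRNADeriv, sub_div]

theorem cgfNewMRNADeriv_zero :
    cgfNewMRNADeriv σ t 0 = (t - (1 - exp (-σ * t)) / σ) / σ := by
  rcases eq_or_ne σ 0 with rfl | hσ
  · simp [cgfNewMRNADeriv]
  · simp only [cgfNewMRNADeriv, sub_zero, neg_mul, zero_div, zero_mul, add_zero]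
    field_simp

theorem hasDerivAt_exp_neg_sub_mul (ζ : ℝ) :
    HasDerivAt (fun ζ => exp (-(σ - ζ) * t)) (t * exp (-(σ - ζ) * t)) ζ := by
  refine (((hasDerivAt_id' ζ).const_sub σ).neg.mul_const t).exp.congr_deriv ?_
  simp only [Pi.neg_apply]
  ring

theorem hasDerivAt_cgfInitialMRNA {ζ : ℝ} (hu : σ - ζ ≠ 0)
    (hN : σ - ζ * exp (-(σ - ζ) * t) ≠ 0) :
    HasDerivAt (cgfInitialMRNA σ t) (cgfInitialMRNADeriv σ t ζ) ζ := by
  have hE := hasDerivAt_exp_neg_sub_mul σ t ζ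
  have := ((((hasDerivAt_id' ζ).mul hE).const_sub σ).div ((hasDerivAt_id' ζ).const_sub σ) hu).log
    (div_ne_zero hN hu)
  refine this.congr_deriv ?_
  simp only [cgfInitialMRNADeriv, Pi.mul_apply, Pi.div_apply]
  generalize exp (-(σ - ζ) * t) = E at hN ⊢
  -- `field_simp` writes this denominator as `σ - E * ζ`
  rw [mul_comm] at hN
  field_simp
  ring

theorem hasDerivAt_cgfNewMRNA {ζ : ℝ} (hu : σ - ζ ≠ 0) :
    HasDerivAt (cgfNewMRNA σ t) (cgfNewMRNADeriv σ t ζ) ζ := by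
  have hE := hasDerivAt_exp_neg_sub_mul σ t ζ
  have hu' := (hasDerivAt_id' ζ).const_sub σ
  have := ((hasDerivAt_id' ζ).div hu' hu).mul (((hE.const_sub 1).div hu' hu).const_sub t)
  refine this.congr_deriv ?_
  simp only [cgfNewMRNADeriv, Pi.div_apply]
  field_simp
  ring

theorem hasDerivAt_cgfInitialMRNADeriv_zero (hσ : σ ≠ 0) :
    HasDerivAt (cgfInitialMRNADeriv σ t)
      ((1 - 2 * σ * t * exp (-σ * t) - exp (-σ * t) ^ 2) / σ ^ 2) 0 := by
  have hE := hasDerivAt_exp_neg_sub_mul σ t 0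
  have hu' := (hasDerivAt_id' (0 : ℝ)).const_sub σ
  have hNum := ((hasDerivAt_id' (0 : ℝ)).mul hE).const_sub σ
  have := (((hasDerivAt_const (0 : ℝ) (1 : ℝ)).div hu' (by simpa using hσ)).sub
    ((hE.mul (((hasDerivAt_id' (0 : ℝ)).mul_const t).const_add 1)).div hNum (by simpa using hσ)))
  refine this.congr_deriv ?_
  simp only [Pi.mul_apply, sub_zero, zero_mul]
  field_simp
  ring

theorem hasDerivAt_cgfNewMRNADeriv_zero (hσ : σ ≠ 0) :
    HasDerivAt (cgfNewMRNADeriv σ t)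
      (2 * (σ * t * (1 + exp (-σ * t)) - 2 * (1 - exp (-σ * t))) / σ ^ 3) 0 := by
  have hE := hasDerivAt_exp_neg_sub_mul σ t 0
  have hu' := (hasDerivAt_id' (0 : ℝ)).const_sub σ
  have hu2 := hu'.pow 2
  have h0 : σ - 0 ≠ 0 := by simpa using hσ
  have h02 : (σ - 0) ^ 2 ≠ 0 := pow_ne_zero 2 h0
  have hfirst := ((hasDerivAt_const (0 : ℝ) σ).div hu2 h02).mul
    (((hE.const_sub 1).div hu' h0).const_sub t)
  have hsecond := ((hasDerivAt_id' (0 : ℝ)).div hu' h0).mul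
    ((((hE.const_mul t).mul hu').sub (hE.const_sub 1)).div hu2 h02)
  have := hfirst.add hsecond
  refine this.congr_deriv ?_
  simp only [Pi.mul_apply, Pi.div_apply, Pi.sub_apply, Pi.pow_apply, sub_zero, zero_mul]
  field_simp
  ring

theorem eventually_sub_mul_exp_ne_zero (hσ : σ ≠ 0) :
    ∀ᶠ ζ in 𝓝 0, σ - ζ * exp (-(σ - ζ) * t) ≠ 0 := by
  have hcont : ContinuousAt (fun ζ : ℝ => σ - ζ * exp (-(σ - ζ) * t)) 0 := by fun_prop
  exact hcont.eventually_ne (by simpa using hσ)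

theorem eventually_lt_and_div_pos (hσ : 0 < σ) :
    ∀ᶠ ζ in 𝓝 0, ζ < σ ∧ 0 < (σ - ζ * exp (-(σ - ζ) * t)) / (σ - ζ) := by
  have hcont : ContinuousAt (fun ζ : ℝ => σ - ζ * exp (-(σ - ζ) * t)) 0 := by fun_prop
  filter_upwards [eventually_lt_nhds hσ,
    continuousAt_const.eventually_lt hcont (by simpa using hσ)] with ζ hζ hN
  exact ⟨hζ, div_pos hN (sub_pos.2 hζ)⟩

theorem hasSecondDerivAt_cgfInitialMRNA (hσ : σ ≠ 0) :
    HasSecondDerivAt (cgfInitialMRNA σ t) (cgfInitialMRNADeriv σ t)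
      ((1 - 2 * σ * t * exp (-σ * t) - exp (-σ * t) ^ 2) / σ ^ 2) 0 :=
  ⟨((eventually_ne_nhds hσ.symm).and (eventually_sub_mul_exp_ne_zero σ t hσ)).mono
      fun _ h => hasDerivAt_cgfInitialMRNA σ t (sub_ne_zero.2 h.1.symm) h.2,
    hasDerivAt_cgfInitialMRNADeriv_zero σ t hσ⟩

theorem hasSecondDerivAt_cgfNewMRNA (hσ : σ ≠ 0) :
    HasSecondDerivAt (cgfNewMRNA σ t) (cgfNewMRNADeriv σ t)
      (2 * (σ * t * (1 + exp (-σ * t)) - 2 * (1 - exp (-σ * t))) / σ ^ 3) 0 :=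
  ⟨(eventually_ne_nhds hσ.symm).mono fun _ h => hasDerivAt_cgfNewMRNA σ t (sub_ne_zero.2 h.symm),
    hasDerivAt_cgfNewMRNADeriv_zero σ t hσ⟩

end MRNA

theorem mgf_protein_after_replication_two_derivs_general
    (sig1 lam1 lam2 t Mtau Ptau : ℝ)
    (hsig1 : 0 < sig1)
    (h2 F2 : ℝ → ℝ)
    (hh2 : ∀ ζ : ℝ, ζ < sig1 →
        0 < (sig1 - ζ * Real.exp (-(sig1 - ζ) * t)) / (sig1 - ζ) →
      h2 ζ = Real.exp (Mtau * Real.log ((sig1 - ζ * Real.exp (-(sig1 - ζ) * t)) / (sig1 - ζ))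
        + 2 * lam1 * (ζ / (sig1 - ζ))
          * (t - (1 - Real.exp (-(sig1 - ζ) * t)) / (sig1 - ζ))))
    (hF2 : ∀ ξ : ℝ, F2 ξ = Real.exp (ξ * Ptau) * h2 (lam2 * (Real.exp ξ - 1))) :
    HasDerivAt F2
      (Ptau + lam2 * (2 * (lam1 / sig1) * t
        + (Mtau - 2 * lam1 / sig1) * (1 - Real.exp (-sig1 * t)) / sig1)) 0 ∧
    HasDerivAt (deriv F2)
      ((Ptau + lam2 * (2 * (lam1 / sig1) * t
          + (Mtau - 2 * lam1 / sig1) * (1 - Real.exp (-sig1 * t)) / sig1)) ^ 2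
        + Mtau * (lam2 / sig1) * (1 - Real.exp (-sig1 * t)
          + lam2 / sig1 * (1 - Real.exp (-sig1 * t)
            * (Real.exp (-sig1 * t) + 2 * t * sig1)))
        + 2 * (lam1 * lam2 / sig1 ^ 2) * (t * sig1 - 1 + Real.exp (-sig1 * t)
          + 2 * (lam2 / sig1) * (sig1 * t * (1 + Real.exp (-sig1 * t))
            - 2 * (1 - Real.exp (-sig1 * t))))) 0 := by
  set K : ℝ → ℝ := fun ζ => Mtau * cgfInitialMRNA sig1 t ζ + 2 * lam1 * cgfNewMRNA sig1 t ζ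
  have hK : HasSecondDerivAt K _ _ 0 :=
    ((hasSecondDerivAt_cgfInitialMRNA sig1 t hsig1.ne').const_mul Mtau).add
      ((hasSecondDerivAt_cgfNewMRNA sig1 t hsig1.ne').const_mul (2 * lam1))
  have hg := (hasSecondDerivAt_mul_const Ptau 0).add
    (hK.comp (hasSecondDerivAt_const_mul_exp_sub_one lam2 0) (by simp))
  have hF : F2 =ᶠ[𝓝 0] exp ∘ fun ξ => ξ * Ptau + K (lam2 * (exp ξ - 1)) := by
    have hφ : Tendsto (fun ξ => lam2 * (exp ξ - 1)) (𝓝 0) (𝓝 0) :=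
      ((continuous_exp.sub continuous_const).const_mul lam2).tendsto' 0 0 (by simp)
    filter_upwards [hφ.eventually (eventually_lt_and_div_pos sig1 t hsig1)] with ξ hξ
    rw [hF2, hh2 _ hξ.1 hξ.2, Function.comp_apply, ← exp_add]
    simp only [K, cgfInitialMRNA, cgfNewMRNA, mul_assoc]
  have h := ((hasSecondDerivAt_exp _).comp hg rfl).congr_of_eventuallyEq hF
  refine ⟨h.hasDerivAt.congr_deriv ?_, h.hasDerivAt_deriv.congr_deriv ?_⟩
  all_goals
    simp only [K, Function.comp_apply, zero_mul, mul_zero, mul_one, one_mul, zero_add, add_zero,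
      exp_zero, sub_self, neg_mul, cgfInitialMRNA_zero, cgfNewMRNA_zero, cgfInitialMRNADeriv_zero,
      cgfNewMRNADeriv_zero]
    field_simp
    ring

/-- The conditional moment generating function
`F₂ ξ = e^{ξ P_τ} · h₂(λ₂(e^ξ − 1))` of the protein number a time `t` after gene
replication (where transcription occurs at the doubled rate `2λ₁`) is twice
differentiable at `0`, with first derivative
`F₂'(0) = P_τ + λ₂(2(λ₁/σ₁)t + (M_τ − 2λ₁/σ₁)(1 − e^{−σ₁ t})/σ₁)` and second derivative
`F₂''(0) = F₂'(0)² + M_τ (λ₂/σ₁)(1 − e^{−σ₁ t} + (λ₂/σ₁)(1 − e^{−σ₁ t}(e^{−σ₁ t} + 2tσ₁)))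
  + 2(λ₁λ₂/σ₁²)(tσ₁ − 1 + e^{−σ₁ t} + 2(λ₂/σ₁)(σ₁ t (1 + e^{−σ₁ t}) − 2(1 − e^{−σ₁ t})))`. -/
theorem mgf_protein_after_replication_two_derivs
    (sig1 lam1 lam2 t Mtau Ptau : ℝ)
    (hsig1 : 0 < sig1) (hlam1 : 0 ≤ lam1) (hlam2 : 0 ≤ lam2) (ht : 0 ≤ t) (hMtau : 0 ≤ Mtau)
    (h2 F2 : ℝ → ℝ)
    (hh2 : ∀ ζ : ℝ, ζ < sig1 →
        0 < (sig1 - ζ * Real.exp (-(sig1 - ζ) * t)) / (sig1 - ζ) →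
      h2 ζ = Real.exp (Mtau * Real.log ((sig1 - ζ * Real.exp (-(sig1 - ζ) * t)) / (sig1 - ζ))
        + 2 * lam1 * (ζ / (sig1 - ζ))
          * (t - (1 - Real.exp (-(sig1 - ζ) * t)) / (sig1 - ζ))))
    (hF2 : ∀ ξ : ℝ, F2 ξ = Real.exp (ξ * Ptau) * h2 (lam2 * (Real.exp ξ - 1))) :
    HasDerivAt F2
      (Ptau + lam2 * (2 * (lam1 / sig1) * t
        + (Mtau - 2 * lam1 / sig1) * (1 - Real.exp (-sig1 * t)) / sig1)) 0 ∧
    HasDerivAt (deriv F2)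
      ((Ptau + lam2 * (2 * (lam1 / sig1) * t
          + (Mtau - 2 * lam1 / sig1) * (1 - Real.exp (-sig1 * t)) / sig1)) ^ 2
        + Mtau * (lam2 / sig1) * (1 - Real.exp (-sig1 * t)
          + lam2 / sig1 * (1 - Real.exp (-sig1 * t)
            * (Real.exp (-sig1 * t) + 2 * t * sig1)))
        + 2 * (lam1 * lam2 / sig1 ^ 2) * (t * sig1 - 1 + Real.exp (-sig1 * t)
          + 2 * (lam2 / sig1) * (sig1 * t * (1 + Real.exp (-sig1 * t))
            - 2 * (1 - Real.exp (-sig1 * t))))) 0 :=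
  mgf_protein_after_replication_two_derivs_general sig1 lam1 lam2 t Mtau Ptau hsig1 h2 F2 hh2 hF2
end
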